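/- arXiv:cs/0408043 — 2 statements merged into one kernel-verified Lean document; each statement's English description precedes it below -/
import Mathlib

section
/- For every odd n, the class Sigma^0_n (lightface, over Cantor space) is properly contained in Sigma^0_n[Pi^0_1], the variant where the innermost predicate is allowed to be co-computably-enumerable rather than computable. -/
open Filter Topology

abbrev Cantor := ℕ → Bool

/-- The length-`n` prefix of an infinite binary sequence, as a list. -/
def pref (X : ℕ → Bool) (n : ℕ) : List Bool := (List.range n).map X

/-- A predicate is computably enumerable (c.e., Σ⁰₁). -/
def CEPred {α : Type} [Primcodable α] (P : α → Prop) : Prop :=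
  ∃ f : α →. Unit, Partrec f ∧ ∀ a, P a ↔ (f a).Dom

/-- A predicate (of the outer quantified numbers together with a finite prefix
of the sequence) is Δ⁰₁, i.e. computable. -/
def DeltaPred (P : List ℕ → List Bool → Prop) : Prop :=
  ComputablePred fun p : List ℕ × List Bool => P p.1 p.2

/-- A predicate is Π⁰₁, i.e. co-computably enumerable. -/
def PiPred (P : List ℕ → List Bool → Prop) : Prop :=
  CEPred fun p : List ℕ × List Bool => ¬ P p.1 p.2

/-- `AltQ n b P ks A`: `n` alternating quantifiers (starting with `∃` if `b`,
with `∀` otherwise) applied to the predicate `P`, where the innermost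
quantified variable is the length of the prefix of `A` handed to `P`, and `ks`
accumulates the previously quantified numbers. -/
def AltQ : ℕ → Bool → (List ℕ → List Bool → Prop) → List ℕ → Cantor → Prop
  | 0, _, P, ks, _ => P ks []
  | 1, true, P, ks, A => ∃ k, P ks (pref A k)
  | 1, false, P, ks, A => ∀ k, P ks (pref A k)
  | n+2, true, P, ks, A => ∃ k, AltQ (n+1) false P (ks ++ [k]) A
  | n+2, false, P, ks, A => ∀ k, AltQ (n+1) true P (ks ++ [k]) A

/-- `X ∈ Σ⁰ₙ[C]`: definable with `n` alternating quantifiers starting with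
`∃`, over some predicate in the class `C`. -/
def SigmaIn (n : ℕ) (C : (List ℕ → List Bool → Prop) → Prop) (X : Set Cantor) : Prop :=
  ∃ P, C P ∧ ∀ A : Cantor, A ∈ X ↔ AltQ n true P [] A

/-- `X ∈ Π⁰ₙ[C]`: definable with `n` alternating quantifiers starting with
`∀`, over some predicate in the class `C`. -/
def PiIn (n : ℕ) (C : (List ℕ → List Bool → Prop) → Prop) (X : Set Cantor) : Prop :=
  ∃ P, C P ∧ ∀ A : Cantor, A ∈ X ↔ AltQ n false P [] A

/-!
Let `SigmaUniv n` be a universal Σ⁰ₙ relation on ℕ, so that `D = {m | ¬ SigmaUniv n m m}` is not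
Σ⁰ₙ, by diagonalisation, and let `X` be the union of the cylinders `[0^m 1]` over `m ∈ D`. If `X`
were Σ⁰ₙ, so would be `D = {m | 0^m 1 0 0 ⋯ ∈ X}`: substituting a computable point into a Σ⁰ₙ
definition gives a Σ⁰ₙ definition on ℕ. But `X` is Σ⁰ₙ[Π⁰₁]: as `n` is odd, the innermost
quantifier is an `∃` over prefix lengths, which can both read `m` off the prefix and absorb the
innermost `∃` of the Π⁰ₙ formula `¬ SigmaUniv n m m` written over a Π⁰₁ matrix.
-/

open Nat.Partrec (Code)
open Nat.Partrec.Code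

theorem REPred.cePred {α : Type} [Primcodable α] {P : α → Prop} (h : REPred P) : CEPred P :=
  ⟨_, h, fun _ => ⟨fun hp => ⟨hp, trivial⟩, fun hp => hp.1⟩⟩

theorem DeltaPred.piPred {P : List ℕ → List Bool → Prop} (hP : DeltaPred P) : PiPred P :=
  hP.not.to_re.cePred

theorem ComputablePred.comp {α β : Type} [Primcodable α] [Primcodable β] {Q : β → Prop}
    {f : α → β} (hQ : ComputablePred Q) (hf : Computable f) : ComputablePred fun a => Q (f a) :=
  let ⟨_, hQ⟩ := hQ
  ⟨inferInstance, hQ.comp hf⟩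

/-- `ArithPred n b Q`: `Q` is Σ⁰ₙ if `b` and Π⁰ₙ otherwise, tuples being coded by `Nat.pair`. -/
def ArithPred : ℕ → Bool → (ℕ → Prop) → Prop
  | 0, _, Q => ComputablePred Q
  | n + 1, b, Q => ∃ R, ArithPred n (!b) R ∧
      ∀ m, Q m ↔ cond b (∃ k, R (Nat.pair m k)) (∀ k, R (Nat.pair m k))

namespace ArithPred

variable {n : ℕ} {b : Bool} {Q : ℕ → Prop}

theorem of_iff {Q' : ℕ → Prop} (h : ArithPred n b Q) (H : ∀ m, Q m ↔ Q' m) :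
    ArithPred n b Q' :=
  (funext fun m => propext (H m) : Q = Q') ▸ h

theorem succ {S : ℕ → ℕ → Prop} (h : ArithPred n (!b) fun y => S y.unpair.1 y.unpair.2) :
    ArithPred (n + 1) b fun x => cond b (∃ k, S x k) (∀ k, S x k) :=
  ⟨_, h, fun m => by simp only [Nat.unpair_pair]⟩

protected theorem not (hQ : ArithPred n b Q) : ArithPred n (!b) fun m => ¬ Q m := by
  induction n generalizing b Q with
  | zero => exact ComputablePred.not hQ
  | succ n ih =>
    obtain ⟨R, hR, hQ⟩ := hQ
    refine (succ (S := fun x k => ¬ R (Nat.pair x k)) ?_).of_iff fun m => ?_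
    · simpa only [Nat.pair_unpair, Bool.not_not] using ih hR
    · cases b <;> simp [hQ m]

end ArithPred

/-- `SigmaUniv n` is a universal Σ⁰ₙ relation (for `n ≥ 1`). -/
def SigmaUniv : ℕ → ℕ → ℕ → Prop
  | 0, _, _ => False
  | 1, e, x => (eval (Denumerable.ofNat Code e) x).Dom
  | n + 2, e, x => ∃ k, ¬ SigmaUniv (n + 1) e (Nat.pair x k)

theorem exists_code_dom_iff {R : ℕ → Prop} (hR : ComputablePred R) :
    ∃ c : Code, ∀ m, (eval c m).Dom ↔ ∃ k, R (Nat.pair m k) := by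
  obtain ⟨g, hg, rfl⟩ := ComputablePred.computable_iff.1 hR
  have hsearch : Partrec fun m => Nat.rfind fun k => Part.some (g (Nat.pair m k)) :=
    Partrec.rfind (hg.comp Primrec₂.natPair.to_comp).to₂.partrec₂
  obtain ⟨c, hc⟩ := exists_code.1 (Partrec.nat_iff.1 hsearch)
  refine ⟨c, fun m => ?_⟩
  rw [hc]
  refine (Nat.rfind_dom (p := fun k => Part.some (g (Nat.pair m k)))).trans ?_
  simp only [Part.mem_some_iff, Part.some_dom, implies_true, and_true]
  exact exists_congr fun k => eq_comm

theorem ArithPred.exists_sigmaUniv {n : ℕ} {Q : ℕ → Prop} (hQ : ArithPred (n + 1) true Q) :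
    ∃ e, ∀ m, Q m ↔ SigmaUniv (n + 1) e m := by
  induction n generalizing Q with
  | zero =>
    obtain ⟨R, hR, hQ⟩ := hQ
    obtain ⟨c, hc⟩ := exists_code_dom_iff hR
    exact ⟨Encodable.encode c, fun m => by simp [SigmaUniv, hc, hQ m]⟩
  | succ n ih =>
    obtain ⟨R, hR, hQ⟩ := hQ
    obtain ⟨e, he⟩ := ih hR.not
    exact ⟨e, fun m => by simp [SigmaUniv, hQ m, ← he]⟩

theorem not_arithPred_not_sigmaUniv_diag (n : ℕ) :
    ¬ ArithPred (n + 1) true fun m => ¬ SigmaUniv (n + 1) m m := fun h =>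
  let ⟨e, he⟩ := h.exists_sigmaUniv
  iff_not_self (he e).symm

def cyl (m : ℕ) : Set Cantor := {A | A m = true ∧ ∀ i < m, A i = false}

theorem eq_of_mem_cyl {A : Cantor} {m m' : ℕ} (h : A ∈ cyl m) (h' : A ∈ cyl m') : m = m' := by
  rcases lt_trichotomy m m' with hlt | heq | hlt
  · exact absurd (h'.2 m hlt) (by simp [h.1])
  · exact heq
  · exact absurd (h.2 m' hlt) (by simp [h'.1])

theorem forall_exists_cyl_iff {A : Cantor} {p : ℕ → ℕ → Prop} :
    (∀ k, ∃ m, A ∈ cyl m ∧ p m k) ↔ ∃ m, A ∈ cyl m ∧ ∀ k, p m k := by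
  refine ⟨fun h => ?_, fun ⟨m, hm, hp⟩ k => ⟨m, hm, hp k⟩⟩
  obtain ⟨m, hm, -⟩ := h 0
  refine ⟨m, hm, fun k => ?_⟩
  obtain ⟨m', hm', hp⟩ := h k
  rwa [eq_of_mem_cyl hm hm']

def cylPoint (m : ℕ) : Cantor := fun i => decide (i = m)

theorem cylPoint_mem_cyl_iff {m m' : ℕ} : cylPoint m ∈ cyl m' ↔ m' = m := by
  simp only [cyl, cylPoint, Set.mem_ofPred_eq, decide_eq_true_eq, decide_eq_false_iff_not]
  exact ⟨And.left, fun h => ⟨h, fun i hi => by omega⟩⟩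

theorem primrec_cylPoint : Primrec₂ cylPoint :=
  (Primrec.eq.comp Primrec.snd Primrec.fst).decide

theorem length_pref (A : Cantor) (k : ℕ) : (pref A k).length = k := by simp [pref]

theorem primrec_pref {α : Type} [Primcodable α] {A : α → Cantor} (hA : Primrec₂ A) :
    Primrec₂ fun a k => pref (A a) k :=
  Primrec.list_map (Primrec.list_range.comp Primrec.snd) (hA.comp (Primrec.fst.comp Primrec.fst)
    Primrec.snd)

theorem findIdx_pref_eq_iff {A : Cantor} {m k : ℕ} (hm : m < k) :
    (pref A k).findIdx id = m ↔ A ∈ cyl m := by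
  rw [List.findIdx_eq (by simpa [pref] using hm)]
  simp [pref, cyl]

theorem altQ_one (b : Bool) (P : List ℕ → List Bool → Prop) (ks : List ℕ) (A : Cantor) :
    AltQ 1 b P ks A = cond b (∃ k, P ks (pref A k)) (∀ k, P ks (pref A k)) := by
  cases b <;> rfl

theorem altQ_add_two (n : ℕ) (b : Bool) (P : List ℕ → List Bool → Prop) (ks : List ℕ)
    (A : Cantor) :
    AltQ (n + 2) b P ks A =
      cond b (∃ k, AltQ (n + 1) (!b) P (ks ++ [k]) A) (∀ k, AltQ (n + 1) (!b) P (ks ++ [k]) A) := by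
  cases b <;> rfl

theorem DeltaPred.arithPred_altQ {P : List ℕ → List Bool → Prop} (hP : DeltaPred P) :
    ∀ (n : ℕ) (b : Bool) {ks : ℕ → List ℕ} {A : ℕ → Cantor}, Computable ks → Primrec₂ A →
      ArithPred n b fun x => AltQ n b P (ks x) (A x)
  | 0, _, _, _, hks, _ => ComputablePred.comp hP (hks.pair (Computable.const []))
  | 1, b, ks, A, hks, hA => by
    have hpref : Computable fun y : ℕ => pref (A y.unpair.1) y.unpair.2 :=
      ((primrec_pref hA).comp (Primrec.fst.comp Primrec.unpair)
        (Primrec.snd.comp Primrec.unpair)).to_comp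
    simpa only [altQ_one] using
      ArithPred.succ (n := 0) (b := b) (S := fun x k => P (ks x) (pref (A x) k))
        (ComputablePred.comp hP ((hks.comp (Computable.fst.comp Computable.unpair)).pair hpref))
  | n + 2, b, ks, A, hks, hA => by
    simpa only [altQ_add_two] using ArithPred.succ (b := b)
      (hP.arithPred_altQ (n + 1) (!b) (ks := fun y => ks y.unpair.1 ++ [y.unpair.2])
        (A := fun y => A y.unpair.1)
        (Primrec.list_append.to_comp.comp (hks.comp (Computable.fst.comp Computable.unpair))
          (Primrec.list_cons.to_comp.comp (Computable.snd.comp Computable.unpair)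
            (Computable.const [])))
        (hA.comp (Primrec.fst.comp (Primrec.unpair.comp Primrec.fst)) Primrec.snd))

theorem SigmaIn.arithPred_cylPoint {n : ℕ} {X : Set Cantor} (hX : SigmaIn n DeltaPred X) :
    ArithPred n true fun m => cylPoint m ∈ X :=
  let ⟨_, hP, hX⟩ := hX
  (hP.arithPred_altQ n true (Computable.const []) primrec_cylPoint).of_iff fun _ => (hX _).symm

def diagSet (n : ℕ) : Set Cantor := ⋃ m ∈ {m | ¬ SigmaUniv n m m}, cyl m

theorem mem_diagSet {n : ℕ} {A : Cantor} :
    A ∈ diagSet n ↔ ∃ m, A ∈ cyl m ∧ ¬ SigmaUniv n m m := by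
  simp only [diagSet, Set.mem_iUnion, Set.mem_ofPred_eq, exists_prop]
  exact exists_congr fun _ => and_comm

theorem cylPoint_mem_diagSet {n m : ℕ} : cylPoint m ∈ diagSet n ↔ ¬ SigmaUniv n m m := by
  simp [mem_diagSet, cylPoint_mem_cyl_iff]

def diagArg (ks : List ℕ) (m j : ℕ) : ℕ := (ks ++ [j]).tail.foldl Nat.pair m

/-- A prefix `s = 0^m 1 t` codes `m` and `j = |t|`. The first outer variable is a dummy, since
`¬ SigmaUniv n m m` starts with `∀` while `Σ⁰ₙ` starts with `∃`; `diagArg` drops it, or drops `j`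
when there are no outer variables (`n = 1`). -/
def diagMatrix (ks : List ℕ) (s : List Bool) : Prop :=
  s.findIdx id < s.length ∧
    ¬ SigmaUniv 1 (s.findIdx id) (diagArg ks (s.findIdx id) (s.length - (s.findIdx id + 1)))

theorem primrec_diagArg : Primrec fun p : List ℕ × ℕ × ℕ => diagArg p.1 p.2.1 p.2.2 :=
  Primrec.list_foldl
    (Primrec.list_tail.comp (Primrec.list_append.comp Primrec.fst
      (Primrec.list_cons.comp (Primrec.snd.comp Primrec.snd) (Primrec.const []))))
    (Primrec.fst.comp Primrec.snd)
    (Primrec₂.natPair.comp (Primrec.fst.comp Primrec.snd) (Primrec.snd.comp Primrec.snd)).to₂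

theorem piPred_diagMatrix : PiPred diagMatrix := by
  have hidx : Primrec fun s : List Bool => s.findIdx id :=
    Primrec.list_findIdx Primrec.id Primrec.snd
  have hlt : Computable fun p : List ℕ × List Bool => decide (p.2.findIdx id < p.2.length) :=
    (Primrec.nat_lt.comp (hidx.comp Primrec.snd)
      (Primrec.list_length.comp Primrec.snd)).decide.to_comp
  have harg : Computable fun p : List ℕ × List Bool =>
      diagArg p.1 (p.2.findIdx id) (p.2.length - (p.2.findIdx id + 1)) :=
    (primrec_diagArg.comp (Primrec.fst.pair ((hidx.comp Primrec.snd).pair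
      (Primrec.nat_sub.comp (Primrec.list_length.comp Primrec.snd)
        (Primrec.succ.comp (hidx.comp Primrec.snd)))))).to_comp
  have hhalt := eval_part.comp ((Computable.ofNat Code).comp (hidx.to_comp.comp Computable.snd)) harg
  refine REPred.cePred ((Partrec.cond hlt hhalt (Partrec.const' (Part.some 0))).dom_re.of_eq
    fun p => ?_)
  by_cases h : p.2.findIdx id < p.2.length <;> simp [diagMatrix, SigmaUniv, h]

theorem diagMatrix_pref_iff {ks : List ℕ} {A : Cantor} {k : ℕ} :
    diagMatrix ks (pref A k) ↔
      ∃ m < k, A ∈ cyl m ∧ ¬ SigmaUniv 1 m (diagArg ks m (k - (m + 1))) := by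
  rw [diagMatrix, length_pref]
  constructor
  · rintro ⟨hlt, hU⟩
    exact ⟨_, hlt, (findIdx_pref_eq_iff hlt).1 rfl, hU⟩
  · rintro ⟨m, hlt, hA, hU⟩
    rw [(findIdx_pref_eq_iff hlt).2 hA]
    exact ⟨hlt, hU⟩

theorem exists_diagMatrix_pref_iff {ks : List ℕ} {A : Cantor} :
    (∃ k, diagMatrix ks (pref A k)) ↔ ∃ m, A ∈ cyl m ∧ ∃ j, ¬ SigmaUniv 1 m (diagArg ks m j) := by
  simp only [diagMatrix_pref_iff]
  constructor
  · rintro ⟨k, m, -, hA, hU⟩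
    exact ⟨m, hA, _, hU⟩
  · rintro ⟨m, hA, j, hU⟩
    exact ⟨m + 1 + j, m, by omega, hA, by rwa [show m + 1 + j - (m + 1) = j by omega]⟩

theorem not_sigmaUniv_add_three {n e x : ℕ} :
    ¬ SigmaUniv (n + 3) e x ↔ ∀ k, ∃ k', ¬ SigmaUniv (n + 1) e (Nat.pair (Nat.pair x k) k') := by
  simp [SigmaUniv]

theorem altQ_diagMatrix_two_mul_add_two (i k₀ : ℕ) (ks : List ℕ) (A : Cantor) :
    AltQ (2 * i + 2) false diagMatrix (k₀ :: ks) A ↔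
      ∃ m, A ∈ cyl m ∧ ¬ SigmaUniv (2 * i + 3) m (ks.foldl Nat.pair m) := by
  induction i generalizing ks with
  | zero =>
    change (∀ k, ∃ j, diagMatrix (k₀ :: ks ++ [k]) (pref A j)) ↔ _
    simp only [exists_diagMatrix_pref_iff, forall_exists_cyl_iff, not_sigmaUniv_add_three (n := 0)]
    simp [diagArg]
  | succ i ih =>
    change (∀ k, ∃ k', AltQ (2 * i + 2) false diagMatrix (k₀ :: ks ++ [k] ++ [k']) A) ↔ _
    rw [show 2 * (i + 1) + 3 = 2 * i + 2 + 3 by ring]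
    simp only [List.cons_append, ih, not_sigmaUniv_add_three (n := 2 * i + 2)]
    simp only [exists_comm (α := ℕ) (β := ℕ), exists_and_left, forall_exists_cyl_iff]
    simp [List.foldl_append]

theorem altQ_diagMatrix_iff {n : ℕ} (hn : Odd n) (A : Cantor) :
    AltQ n true diagMatrix [] A ↔ A ∈ diagSet n := by
  obtain ⟨i, rfl⟩ := hn
  rw [mem_diagSet]
  rcases i with _ | i
  · change (∃ k, diagMatrix [] (pref A k)) ↔ _
    simp [exists_diagMatrix_pref_iff, diagArg]
  · change (∃ k, AltQ (2 * i + 2) false diagMatrix [k] A) ↔ _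
    rw [show 2 * (i + 1) + 1 = 2 * i + 3 by ring]
    simp [altQ_diagMatrix_two_mul_add_two]

theorem sigmaIn_piPred_diagSet {n : ℕ} (hn : Odd n) : SigmaIn n PiPred (diagSet n) :=
  ⟨diagMatrix, piPred_diagMatrix, fun A => (altQ_diagMatrix_iff hn A).symm⟩

/-- For every odd `n`, the lightface class Σ⁰ₙ is properly contained in
Σ⁰ₙ[Π⁰₁], the variant whose innermost predicate may be co-c.e. -/
theorem Sigma0n_ssubset_Sigma0n_Pi01 (n : ℕ) (hn : Odd n) :
    (∀ X : Set Cantor, SigmaIn n DeltaPred X → SigmaIn n PiPred X) ∧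
    (∃ X : Set Cantor, SigmaIn n PiPred X ∧ ¬ SigmaIn n DeltaPred X) := by
  refine ⟨fun X ⟨P, hP, hX⟩ => ⟨P, hP.piPred, hX⟩,
    diagSet n, sigmaIn_piPred_diagSet hn, fun hΔ => ?_⟩
  obtain ⟨n, rfl⟩ : ∃ n', n = n' + 1 := ⟨n - 1, by have := hn.pos; omega⟩
  exact not_arithPred_not_sigmaUniv_diag n
    (hΔ.arithPred_cylPoint.of_iff fun _ => cylPoint_mem_diagSet)
end

section
/- The class DIM_str^1 = {X : Dim(X) = 1} is dense in Cantor space but contains no computable sequence; therefore it is not a Pi^0_2 class. -/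
open Filter Topology

/-- A prefix-free machine: a partial computable map from programs (finite
binary strings) to strings, whose domain is an antichain under the prefix
relation. -/
def PFMachine (M : List Bool →. List Bool) : Prop :=
  Partrec M ∧ ∀ p q : List Bool, (M p).Dom → (M q).Dom → p <+: q → p = q

/-- A universal prefix-free machine: a prefix-free machine simulating every
prefix-free machine with only a constant overhead in program length. -/
def UniversalPF (U : List Bool →. List Bool) : Prop :=
  PFMachine U ∧ ∀ M : List Bool →. List Bool, PFMachine M → ∃ c : ℕ,
    ∀ w p : List Bool, w ∈ M p → ∃ q : List Bool, w ∈ U q ∧ q.length ≤ p.length + c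

/-- Prefix-free Kolmogorov complexity with respect to the machine `U`: the
length of a shortest program producing `w`. -/
noncomputable def K (U : List Bool →. List Bool) (w : List Bool) : ℕ :=
  sInf {n : ℕ | ∃ p : List Bool, w ∈ U p ∧ p.length = n}

/-- `dimK U X = liminf_n K(X↾n)/n`, the (Kolmogorov characterization of the)
constructive dimension of the sequence `X`. -/
noncomputable def dimK (U : List Bool →. List Bool) (X : Cantor) : ℝ :=
  Filter.liminf (fun n : ℕ => (K U (pref X n) : ℝ) / n) Filter.atTop

/-- `DimK U X = limsup_n K(X↾n)/n`, the (Kolmogorov characterization of the)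
constructive strong dimension of the sequence `X`. -/
noncomputable def DimK (U : List Bool →. List Bool) (X : Cantor) : ℝ :=
  Filter.limsup (fun n : ℕ => (K U (pref X n) : ℝ) / n) Filter.atTop

/-!
A sequence of strong dimension `1` extends any finite string `σ`: append to `σ` blocks that are
incompressible given what precedes them and long enough to dominate it, so that `K(X↾n)/n` gets
arbitrarily close to `1` infinitely often, while `K(w) ≤ |w| + O(√|w|)` keeps it below `1 + o(1)`.
A computable sequence has `K(X↾n) = O(√n)`, since a program only has to specify `n`, hence strong
dimension `0`. A dense Π⁰₂ class `{A | ∀ k, ∃ m, P [k] (A↾m)}` contains a computable sequence: meet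
the requirements one at a time by finite extensions, found by an unbounded search that terminates
by density. So the class of sequences of strong dimension `1` is not Π⁰₂.
-/

open Encodable

lemma pref_length (X : Cantor) (n : ℕ) : (pref X n).length = n := by simp [pref]

lemma pref_prefix_pref (X : Cantor) {m n : ℕ} (h : m ≤ n) : pref X m <+: pref X n := by
  obtain ⟨k, rfl⟩ := Nat.exists_eq_add_of_le h
  simp only [pref, List.range_add, List.map_append]
  exact List.prefix_append _ _

lemma pref_eq_of_prefix {X : Cantor} {u : List Bool} {n : ℕ} (h : u <+: pref X n) :
    pref X u.length = u :=
  have hle : u.length ≤ n := pref_length X n ▸ h.length_le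
  (List.prefix_of_prefix_length_le (pref_prefix_pref X hle) h (by rw [pref_length])).eq_of_length
    (pref_length X _)

lemma pref_eq_pref_iff {X Y : Cantor} {n : ℕ} : pref X n = pref Y n ↔ ∀ i < n, X i = Y i := by
  simp [pref, List.map_inj_left]

lemma pref_getD (σ : List Bool) : pref (σ.getD · false) σ.length = σ :=
  List.ext_getElem (pref_length _ _) fun i _ hi => by simp [pref, List.getElem?_eq_getElem hi]

lemma dense_iff_forall_exists_pref_eq {S : Set Cantor} :
    Dense S ↔ ∀ σ : List Bool, ∃ X ∈ S, pref X σ.length = σ := by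
  rw [(PiNat.isTopologicalBasis_cylinders _).dense_iff]
  constructor
  · intro h σ
    obtain ⟨X, hXσ, hXS⟩ := h _ ⟨_, σ.length, rfl⟩ ⟨_, PiNat.self_mem_cylinder _ _⟩
    exact ⟨X, hXS, (pref_eq_pref_iff.2 (PiNat.mem_cylinder_iff.1 hXσ)).trans (pref_getD σ)⟩
  · rintro h _ ⟨x, n, rfl⟩ -
    obtain ⟨X, hXS, hX⟩ := h (pref x n)
    rw [pref_length] at hX
    exact ⟨X, PiNat.mem_cylinder_iff.2 (pref_eq_pref_iff.1 hX), hXS⟩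

/-- The common extension of a `<+:`-chain `τ` with `k ≤ (τ k).length` for all `k`. -/
def chainLimit (τ : ℕ → List Bool) : Cantor := fun i => (τ (i + 1)).getD i false

section chainLimit

variable {τ : ℕ → List Bool}

lemma prefix_of_le (hτ : ∀ k, τ k <+: τ (k + 1)) {j k : ℕ} (h : j ≤ k) : τ j <+: τ k := by
  induction h with
  | refl => exact List.prefix_refl _
  | step _ ih => exact ih.trans (hτ _)

lemma pref_chainLimit (hτ : ∀ k, τ k <+: τ (k + 1)) (hlen : ∀ k, k ≤ (τ k).length) (k : ℕ) :
    pref (chainLimit τ) (τ k).length = τ k := by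
  refine List.ext_getElem (pref_length _ _) fun i _ hi => ?_
  have hi' : i < (τ (i + 1)).length := hlen (i + 1)
  simp only [pref, List.getElem_map, List.getElem_range, chainLimit, List.getD_eq_getElem _ _ hi']
  rcases le_total (i + 1) k with h | h
  · exact (prefix_of_le hτ h).getElem hi'
  · exact ((prefix_of_le hτ h).getElem hi).symm

lemma computable_chainLimit (hτ : Computable τ) : Computable (chainLimit τ) :=
  (Primrec.list_getD false).to_comp.comp (hτ.comp Primrec.succ.to_comp) Computable.id

end chainLimit

lemma computable_pref {X : Cantor} (hX : Computable X) : Computable (pref X) := by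
  refine (Computable.nat_rec Computable.id (Computable.const [])
    (Computable.list_concat.comp (Computable.snd.comp Computable.snd)
      (hX.comp (Computable.fst.comp Computable.snd))).to₂).of_eq fun n => ?_
  induction n with
  | zero => rfl
  | succ n ih => rw [pref, List.range_succ, List.map_append, ← pref, ← ih]; rfl

lemma K_le_length {U : List Bool →. List Bool} {w p : List Bool} (h : w ∈ U p) :
    K U w ≤ p.length :=
  Nat.sInf_le ⟨p, h, rfl⟩

/-- A string without a program has the junk complexity `K U w = sInf ∅ = 0`. -/
lemma le_K {U : List Bool →. List Bool} {w : List Bool} {m : ℕ} (hw : ∃ p, w ∈ U p)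
    (h : ∀ p, w ∈ U p → m ≤ p.length) : m ≤ K U w := by
  obtain ⟨p, hp⟩ := hw
  exact le_csInf ⟨_, p, hp, rfl⟩ (by rintro _ ⟨q, hq, rfl⟩; exact h q hq)

def shortStrings (m : ℕ) : Finset (List Bool) :=
  (Finset.range m).biUnion fun i => (Finset.univ : Finset (Fin i → Bool)).image List.ofFn

lemma mem_shortStrings {m : ℕ} {p : List Bool} (hp : p.length < m) : p ∈ shortStrings m :=
  Finset.mem_biUnion.2
    ⟨_, Finset.mem_range.2 hp, Finset.mem_image.2 ⟨_, Finset.mem_univ _, List.ofFn_getElem⟩⟩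

lemma card_shortStrings_lt (m : ℕ) : (shortStrings m).card < 2 ^ m :=
  calc _ ≤ ∑ i ∈ Finset.range m, (Finset.univ : Finset (Fin i → Bool)).card :=
        Finset.card_biUnion_le.trans (Finset.sum_le_sum fun _ _ => Finset.card_image_le)
    _ = ∑ i ∈ Finset.range m, 2 ^ i := by simp
    _ < 2 ^ m := Nat.geomSum_lt le_rfl fun _ => Finset.mem_range.1

lemma exists_length_eq_forall_mem_le {α : Type*} (U : List Bool →. α) {f : List Bool → α}
    (hf : f.Injective) (m : ℕ) :
    ∃ w : List Bool, w.length = m ∧ ∀ p, f w ∈ U p → m ≤ p.length := by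
  by_contra! h
  choose P hPU hPlen using fun g : Fin m → Bool => h (List.ofFn g) List.length_ofFn
  have hPinj : P.Injective := fun g g' hgg' =>
    List.ofFn_injective (hf (Part.mem_unique (hPU g) (hgg' ▸ hPU g')))
  have hcard := Finset.card_le_card_of_injOn (s := Finset.univ) P
    (fun g _ => mem_shortStrings (hPlen g)) hPinj.injOn
  simp only [Finset.card_univ, Fintype.card_fun, Fintype.card_bool, Fintype.card_fin] at hcard
  exact (card_shortStrings_lt m).not_ge hcard

def unaryCode (k : ℕ) : List Bool := List.replicate k true ++ [false]

lemma unaryCode_append_inj : ∀ {k k' : ℕ} {s s' : List Bool},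
    unaryCode k ++ s = unaryCode k' ++ s' → k = k' ∧ s = s'
  | 0, 0, _, _, h => ⟨rfl, by simpa [unaryCode] using h⟩
  | 0, _ + 1, _, _, h => by simp [unaryCode, List.replicate_succ] at h
  | _ + 1, 0, _, _, h => by simp [unaryCode, List.replicate_succ] at h
  | _ + 1, _ + 1, _, _, h => by
    obtain ⟨rfl, rfl⟩ := unaryCode_append_inj (by simpa [unaryCode, List.replicate_succ] using h)
    exact ⟨rfl, rfl⟩

lemma primrec_unaryCode : Primrec unaryCode :=
  (Primrec.list_append.comp
    (Primrec.list_map Primrec.list_range (Primrec.const true).to₂) (Primrec.const [false])).of_eq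
    fun k => by simp [unaryCode, List.map_const']

/-- Writing `n = k * k + r` with `r ≤ 2 k`, this self-delimiting code of `n` has length `O(√n)`,
so it adds only `o(n)` to the length of a string of length `n`. -/
def sqrtHeader (n : ℕ) : List Bool := unaryCode n.sqrt ++ unaryCode (n - n.sqrt * n.sqrt)

lemma sqrtHeader_append_inj {n n' : ℕ} {w w' : List Bool}
    (h : sqrtHeader n ++ w = sqrtHeader n' ++ w') : n = n' ∧ w = w' := by
  simp only [sqrtHeader, List.append_assoc] at h
  obtain ⟨hk, h⟩ := unaryCode_append_inj h
  obtain ⟨hr, rfl⟩ := unaryCode_append_inj h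
  have hn := Nat.sqrt_le n
  have hn' := Nat.sqrt_le n'
  rw [hk] at hr hn
  exact ⟨by omega, rfl⟩

lemma length_sqrtHeader_le (n : ℕ) : (sqrtHeader n).length ≤ 3 * n.sqrt + 2 := by
  have := Nat.lt_succ_sqrt n
  simp only [sqrtHeader, unaryCode, List.length_append, List.length_replicate,
    List.length_singleton, Nat.succ_eq_add_one, add_mul, mul_add] at this ⊢
  omega

lemma primrec_sqrtHeader : Primrec sqrtHeader :=
  Primrec.list_append.comp (primrec_unaryCode.comp Primrec.nat_sqrt)
    (primrec_unaryCode.comp (Primrec.nat_sub.comp Primrec.id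
      (Primrec.nat_mul.comp Primrec.nat_sqrt Primrec.nat_sqrt)))

def headerSearch (ℓ : ℕ → ℕ) (p : List Bool) (i : ℕ) : Option (ℕ × List Bool) :=
  (decode i).bind fun t => if sqrtHeader t.1 ++ t.2 = p ∧ t.2.length = ℓ t.1 then some t else none

def headerMachine (ℓ : ℕ → ℕ) (F : ℕ → List Bool → List Bool) : List Bool →. List Bool :=
  fun p => (Nat.rfindOpt (headerSearch ℓ p)).map fun t => F t.1 t.2

section headerMachine

variable {ℓ : ℕ → ℕ} {F : ℕ → List Bool → List Bool}

lemma mem_headerSearch {p : List Bool} {i : ℕ} {t : ℕ × List Bool} :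
    t ∈ headerSearch ℓ p i ↔
      decode i = some t ∧ sqrtHeader t.1 ++ t.2 = p ∧ t.2.length = ℓ t.1 := by
  simp only [headerSearch, Option.mem_def, Option.bind_eq_some_iff, Option.ite_none_right_eq_some,
    Option.some.injEq]
  constructor
  · rintro ⟨_, h, hc, rfl⟩
    exact ⟨h, hc⟩
  · rintro ⟨h, hc⟩
    exact ⟨t, h, hc, rfl⟩

lemma primrec₂_headerSearch (hℓ : Primrec ℓ) : Primrec₂ (headerSearch ℓ) := by
  have hc : PrimrecPred fun x : (List Bool × ℕ) × (ℕ × List Bool) =>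
      sqrtHeader x.2.1 ++ x.2.2 = x.1.1 ∧ x.2.2.length = ℓ x.2.1 :=
    PrimrecPred.and
      (Primrec.eq.comp (Primrec.list_append.comp (primrec_sqrtHeader.comp
        (Primrec.fst.comp Primrec.snd)) (Primrec.snd.comp Primrec.snd))
        (Primrec.fst.comp Primrec.fst))
      (Primrec.eq.comp (Primrec.list_length.comp (Primrec.snd.comp Primrec.snd))
        (hℓ.comp (Primrec.fst.comp Primrec.snd)))
  exact Primrec.option_bind (Primrec.decode.comp Primrec.snd)
    (Primrec.ite hc (Primrec.option_some.comp Primrec.snd) (Primrec.const none)).to₂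

lemma mem_headerMachine {p x : List Bool} :
    x ∈ headerMachine ℓ F p ↔ ∃ n w, sqrtHeader n ++ w = p ∧ w.length = ℓ n ∧ F n w = x := by
  simp only [headerMachine, Part.mem_map_iff]
  constructor
  · rintro ⟨⟨n, w⟩, ht, rfl⟩
    obtain ⟨-, hp, hw⟩ := mem_headerSearch.1 (Nat.rfindOpt_spec ht).choose_spec
    exact ⟨n, w, hp, hw, rfl⟩
  · rintro ⟨n, w, rfl, hw, rfl⟩
    obtain ⟨t, ht⟩ := Part.dom_iff_mem.1
      (Nat.rfindOpt_dom.2 ⟨encode (n, w), (n, w), mem_headerSearch.2 ⟨encodek _, rfl, hw⟩⟩)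
    obtain ⟨-, hp, -⟩ := mem_headerSearch.1 (Nat.rfindOpt_spec ht).choose_spec
    obtain ⟨rfl, rfl⟩ := sqrtHeader_append_inj hp
    exact ⟨_, ht, rfl⟩

lemma pfMachine_headerMachine (hℓ : Primrec ℓ) (hF : Computable₂ F) :
    PFMachine (headerMachine ℓ F) := by
  refine ⟨(Partrec.rfindOpt (primrec₂_headerSearch hℓ).to_comp).map
    (hF.comp (Computable.fst.comp Computable.snd) (Computable.snd.comp Computable.snd)).to₂,
    fun p q hp hq hpq => ?_⟩
  obtain ⟨n, w, rfl, hw, -⟩ := mem_headerMachine.1 (Part.get_mem hp)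
  obtain ⟨n', w', rfl, hw', -⟩ := mem_headerMachine.1 (Part.get_mem hq)
  obtain ⟨s, hs⟩ := id hpq
  obtain ⟨rfl, -⟩ := sqrtHeader_append_inj ((List.append_assoc _ _ _).symm.trans hs)
  exact hpq.eq_of_length (by simp [hw, hw'])

end headerMachine

lemma tendsto_nat_sqrt_atTop : Tendsto Nat.sqrt atTop atTop :=
  tendsto_atTop_atTop.2 fun b => ⟨b * b, fun _ hn => Nat.le_sqrt.2 hn⟩

lemma tendsto_mul_sqrt_add_div_atTop (a c : ℕ) :
    Tendsto (fun n : ℕ => ((a * n.sqrt + c : ℕ) : ℝ) / n) atTop (𝓝 0) := by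
  refine tendsto_of_tendsto_of_tendsto_of_le_of_le' tendsto_const_nhds
    ((tendsto_const_div_atTop_nhds_zero_nat ((a + c : ℕ) : ℝ)).comp tendsto_nat_sqrt_atTop)
    (Eventually.of_forall fun n => by positivity) ?_
  filter_upwards [eventually_ge_atTop 1] with n hn
  have hs : 0 < n.sqrt := Nat.sqrt_pos.2 hn
  have hss := Nat.sqrt_le n
  have hsn := Nat.sqrt_le_self n
  rw [Function.comp_apply, div_le_div_iff₀ (by positivity) (by positivity)]
  exact_mod_cast (by nlinarith : (a * n.sqrt + c) * n.sqrt ≤ (a + c) * n)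

lemma le_limsup_of_le_comp {α : Type*} [ConditionallyCompleteLinearOrder α] [TopologicalSpace α]
    [OrderTopology α] [DenselyOrdered α] {f g : ℕ → α} {N : ℕ → ℕ} {a : α}
    (hf : IsBoundedUnder (· ≤ ·) atTop f) (hN : Tendsto N atTop atTop) (hg : Tendsto g atTop (𝓝 a))
    (hgf : ∀ k, g k ≤ f (N k)) : a ≤ limsup f atTop :=
  le_of_forall_lt_imp_le_of_dense fun _ hb => le_limsup_of_frequently_le
    (hN.frequently ((hg.eventually (eventually_gt_nhds hb)).mono fun k hk =>
      hk.le.trans (hgf k)).frequently) hf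

namespace UniversalPF

variable {U : List Bool →. List Bool}

lemma exists_program_headerMachine (hU : UniversalPF U) {ℓ : ℕ → ℕ}
    {F : ℕ → List Bool → List Bool} (hℓ : Primrec ℓ) (hF : Computable₂ F) :
    ∃ c, ∀ n w, w.length = ℓ n → ∃ q, F n w ∈ U q ∧ q.length ≤ ℓ n + 3 * n.sqrt + c := by
  obtain ⟨c, hc⟩ := hU.2 _ (pfMachine_headerMachine hℓ hF)
  refine ⟨c + 2, fun n w hw => ?_⟩
  obtain ⟨q, hq, hlen⟩ := hc _ _ (mem_headerMachine.2 ⟨n, w, rfl, hw, rfl⟩)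
  have := length_sqrtHeader_le n
  rw [List.length_append] at hlen
  exact ⟨q, hq, by omega⟩

lemma exists_program_length_le (hU : UniversalPF U) :
    ∃ c, ∀ w : List Bool, ∃ q, w ∈ U q ∧ q.length ≤ w.length + 3 * w.length.sqrt + c := by
  obtain ⟨c, hc⟩ := hU.exists_program_headerMachine (F := fun _ w => w) Primrec.id Computable.snd
  exact ⟨c, fun w => hc w.length w rfl⟩

lemma exists_K_pref_le_of_computable (hU : UniversalPF U) {X : Cantor} (hX : Computable X) :
    ∃ c, ∀ n, K U (pref X n) ≤ 3 * n.sqrt + c := by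
  obtain ⟨c, hc⟩ := hU.exists_program_headerMachine (F := fun n _ => pref X n)
    (Primrec.const 0) ((computable_pref hX).comp Computable.fst)
  refine ⟨c, fun n => ?_⟩
  obtain ⟨q, hq, hlen⟩ := hc n [] rfl
  exact (K_le_length hq).trans (by omega)

lemma exists_tendsto_K_div_le (hU : UniversalPF U) :
    ∃ u : ℕ → ℝ, Tendsto u atTop (𝓝 1) ∧ ∀ X n, (K U (pref X n) : ℝ) / n ≤ u n := by
  obtain ⟨c, hc⟩ := hU.exists_program_length_le
  refine ⟨fun n => 1 + ((3 * n.sqrt + c : ℕ) : ℝ) / n,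
    by simpa using (tendsto_mul_sqrt_add_div_atTop 3 c).const_add 1, fun X n => ?_⟩
  rcases n.eq_zero_or_pos with rfl | hn
  · simp
  obtain ⟨q, hq, hlen⟩ := hc (pref X n)
  rw [pref_length] at hlen
  rw [div_le_iff₀ (by positivity), add_mul, div_mul_cancel₀ _ (by positivity), one_mul]
  exact_mod_cast (K_le_length hq).trans (by omega)

lemma isBoundedUnder_K_div (hU : UniversalPF U) (X : Cantor) :
    IsBoundedUnder (· ≤ ·) atTop fun n : ℕ => (K U (pref X n) : ℝ) / n :=
  have ⟨_, hu, hle⟩ := hU.exists_tendsto_K_div_le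
  hu.isBoundedUnder_le.mono_le (Eventually.of_forall (hle X))

lemma DimK_le_one (hU : UniversalPF U) (X : Cantor) : DimK U X ≤ 1 := by
  obtain ⟨u, hu, hle⟩ := hU.exists_tendsto_K_div_le
  rw [← hu.limsup_eq]
  exact limsup_le_limsup (Eventually.of_forall (hle X))
    (isCoboundedUnder_le_of_le atTop fun n => by positivity) hu.isBoundedUnder_le

lemma DimK_eq_zero_of_computable (hU : UniversalPF U) {X : Cantor} (hX : Computable X) :
    DimK U X = 0 := by
  obtain ⟨c, hc⟩ := hU.exists_K_pref_le_of_computable hX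
  refine Tendsto.limsup_eq (tendsto_of_tendsto_of_tendsto_of_le_of_le tendsto_const_nhds
    (tendsto_mul_sqrt_add_div_atTop 3 c) (fun n => by positivity) fun n => ?_)
  exact div_le_div_of_nonneg_right (Nat.cast_le.2 (hc n)) n.cast_nonneg

lemma exists_pref_eq_DimK_eq_one (hU : UniversalPF U) (σ : List Bool) :
    ∃ X, pref X σ.length = σ ∧ DimK U X = 1 := by
  obtain ⟨c, hc⟩ := hU.exists_program_length_le
  choose block hblock_len hblock using fun (t : List Bool) (m : ℕ) =>
    exists_length_eq_forall_mem_le U (List.append_right_injective t) m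
  -- the `k`-th block is incompressible given `τ k` and so long that
  -- `K U (τ (k + 1)) ≥ k / (k + 1) * (τ (k + 1)).length`
  let τ : ℕ → List Bool := fun k =>
    Nat.rec σ (fun k t => t ++ block t ((k + 1) * (t.length + 1))) k
  have hτ : ∀ k, τ k <+: τ (k + 1) := fun k => List.prefix_append _ _
  have hτ_len : ∀ k, (τ (k + 1)).length = (τ k).length + (k + 1) * ((τ k).length + 1) :=
    fun k => by simp [τ, hblock_len]
  have hlen : ∀ k, k ≤ (τ k).length := by
    rintro (_ | k)
    · exact Nat.zero_le _
    · rw [hτ_len]; nlinarith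
  have hpref := pref_chainLimit hτ hlen
  refine ⟨chainLimit τ, hpref 0, le_antisymm (hU.DimK_le_one _) ?_⟩
  refine le_limsup_of_le_comp (hU.isBoundedUnder_K_div _) (N := fun k => (τ (k + 1)).length)
    (tendsto_atTop_mono (fun k => hlen (k + 1)) (tendsto_add_atTop_nat 1))
    (tendsto_natCast_div_add_atTop (1 : ℝ)) fun k => ?_
  have hK : (k + 1) * ((τ k).length + 1) ≤ K U (τ (k + 1)) :=
    le_K ((hc _).imp fun _ h => h.1) (hblock _ _)
  rw [hpref (k + 1), hτ_len, div_le_div_iff₀ (by positivity) (by positivity)]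
  exact_mod_cast (by nlinarith :
    k * ((τ k).length + (k + 1) * ((τ k).length + 1)) ≤ K U (τ (k + 1)) * (k + 1))

end UniversalPF

lemma exists_computable_of_forall_exists {α β : Type*} [Primcodable α] [Primcodable β]
    {R : α → β → Prop} (hR : ComputablePred fun x : α × β => R x.1 x.2) (h : ∀ a, ∃ b, R a b) :
    ∃ f : α → β, Computable f ∧ ∀ a, R a (f a) := by
  obtain ⟨d, hd, hdR⟩ := ComputablePred.computable_iff.1 hR
  have hR_iff : ∀ a b, R a b ↔ d (a, b) = true := fun a b => iff_of_eq (congrFun hdR (a, b))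
  let search : α → ℕ → Option β := fun a i =>
    (decode i).bind fun b => cond (d (a, b)) (some b) none
  have hsearch : ∀ {a i b}, b ∈ search a i → R a b := fun {a i b} hb => by
    simp only [search, Option.mem_def, Option.bind_eq_some_iff] at hb
    obtain ⟨b', -, hb'⟩ := hb
    cases hdb : d (a, b') <;> simp_all
  have hdom : ∀ a, (Nat.rfindOpt (search a)).Dom := fun a =>
    have ⟨b, hb⟩ := h a
    Nat.rfindOpt_dom.2 ⟨encode b, b, by simp [search, (hR_iff a b).1 hb]⟩
  refine ⟨fun a => (Nat.rfindOpt (search a)).get (hdom a),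
    Partrec.of_eq_tot (Partrec.rfindOpt ?_) fun a => Part.get_mem (hdom a),
    fun a => hsearch (Nat.rfindOpt_spec (Part.get_mem (hdom a))).choose_spec⟩
  exact Computable.option_bind (Computable.decode.comp Computable.snd)
    (Computable.cond (hd.comp ((Computable.fst.comp Computable.fst).pair Computable.snd))
      (Computable.option_some.comp Computable.snd) (Computable.const none)).to₂

/-- `IsExtensionStep P (k, t) (s, u, v)`: the proper extension `t ++ s = u ++ v` of `t` has a
prefix `u` satisfying `P [k]`. -/
def IsExtensionStep (P : List ℕ → List Bool → Prop) (a : ℕ × List Bool)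
    (b : List Bool × List Bool × List Bool) : Prop :=
  b.1 ≠ [] ∧ a.2 ++ b.1 = b.2.1 ++ b.2.2 ∧ P [a.1] b.2.1

lemma computablePred_isExtensionStep {P : List ℕ → List Bool → Prop} (hP : DeltaPred P) :
    ComputablePred fun x : (ℕ × List Bool) × (List Bool × List Bool × List Bool) =>
      IsExtensionStep P x.1 x.2 := by
  obtain ⟨d, hd, hdP⟩ := ComputablePred.computable_iff.1 hP
  have hne : Computable fun x : (ℕ × List Bool) × (List Bool × List Bool × List Bool) =>
      decide (x.2.1 ≠ []) :=
    (PrimrecPred.not (Primrec.eq.comp (Primrec.fst.comp Primrec.snd)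
      (Primrec.const []))).decide.to_comp
  have happ : Computable fun x : (ℕ × List Bool) × (List Bool × List Bool × List Bool) =>
      decide (x.1.2 ++ x.2.1 = x.2.2.1 ++ x.2.2.2) :=
    (Primrec.eq.comp
      (Primrec.list_append.comp (Primrec.snd.comp Primrec.fst) (Primrec.fst.comp Primrec.snd))
      (Primrec.list_append.comp (Primrec.fst.comp (Primrec.snd.comp Primrec.snd))
        (Primrec.snd.comp (Primrec.snd.comp Primrec.snd)))).decide.to_comp
  have hdx : Computable fun x : (ℕ × List Bool) × (List Bool × List Bool × List Bool) =>
      d ([x.1.1], x.2.2.1) :=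
    hd.comp ((Computable.list_cons.comp (Computable.fst.comp Computable.fst)
      (Computable.const [])).pair (Computable.fst.comp (Computable.snd.comp Computable.snd)))
  refine ComputablePred.computable_iff.2
    ⟨_, Primrec.and.to_comp.comp hne (Primrec.and.to_comp.comp happ hdx), funext fun x => ?_⟩
  simp [IsExtensionStep, congrFun hdP ([x.1.1], x.2.2.1)]

lemma exists_isExtensionStep_of_dense {P : List ℕ → List Bool → Prop} {S : Set Cantor}
    (hS : ∀ A ∈ S, ∀ k, ∃ m, P [k] (pref A m)) (hdense : Dense S) (a : ℕ × List Bool) :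
    ∃ b, IsExtensionStep P a b := by
  obtain ⟨k, t⟩ := a
  obtain ⟨Y, hYS, hYt⟩ := dense_iff_forall_exists_pref_eq.1 hdense t
  obtain ⟨m, hm⟩ := hS Y hYS k
  obtain ⟨s, hs⟩ := pref_prefix_pref Y (show t.length ≤ max m (t.length + 1) by omega)
  obtain ⟨v, hv⟩ := pref_prefix_pref Y (le_max_left m (t.length + 1))
  refine ⟨(s, pref Y m, v), ?_, by rw [hv, ← hs, hYt], hm⟩
  rintro rfl
  have := congrArg List.length hs
  simp only [List.append_nil, pref_length] at this
  omega

lemma exists_computable_forall_exists_pref {P : List ℕ → List Bool → Prop} (hP : DeltaPred P)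
    (hext : ∀ a, ∃ b, IsExtensionStep P a b) :
    ∃ X : Cantor, Computable X ∧ ∀ k, ∃ m, P [k] (pref X m) := by
  obtain ⟨step, hstep, hstepP⟩ :=
    exists_computable_of_forall_exists (computablePred_isExtensionStep hP) hext
  let τ : ℕ → List Bool := fun k => Nat.rec [] (fun k t => t ++ (step (k, t)).1) k
  have hτ : ∀ k, τ k <+: τ (k + 1) := fun k => List.prefix_append _ _
  have hlen : ∀ k, k ≤ (τ k).length := by
    intro k
    induction k with
    | zero => exact Nat.zero_le _
    | succ k ih =>
      have := List.length_pos_of_ne_nil (hstepP (k, τ k)).1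
      show k + 1 ≤ (τ k ++ (step (k, τ k)).1).length
      rw [List.length_append]
      omega
  have hτ_comp : Computable τ := Computable.nat_rec Computable.id (Computable.const [])
    (Computable.list_append.comp (Computable.snd.comp Computable.snd)
      (Computable.fst.comp (hstep.comp Computable.snd))).to₂
  refine ⟨chainLimit τ, computable_chainLimit hτ_comp, fun k => ⟨(step (k, τ k)).2.1.length, ?_⟩⟩
  obtain ⟨-, happ, hu⟩ := hstepP (k, τ k)
  rwa [pref_eq_of_prefix (n := (τ (k + 1)).length)
    (by rw [pref_chainLimit hτ hlen (k + 1)]; exact ⟨_, happ.symm⟩)]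

lemma PiIn.exists_computable_mem_of_dense {S : Set Cantor} (hS : PiIn 2 DeltaPred S)
    (hdense : Dense S) : ∃ X ∈ S, Computable X := by
  obtain ⟨P, hP, hSP⟩ := hS
  obtain ⟨X, hX, hXP⟩ := exists_computable_forall_exists_pref hP
    (exists_isExtensionStep_of_dense (fun A hA => (hSP A).1 hA) hdense)
  exact ⟨X, (hSP X).2 hXP, hX⟩

/-- The class `DIM_str^1 = {X | Dim(X) = 1}` is dense in Cantor space but
contains no computable sequence; therefore it is not a Π⁰₂ class. -/
theorem DIMstr_one_dense_no_computable_not_Pi02 (U : List Bool →. List Bool)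
    (hU : UniversalPF U) :
    Dense {X : Cantor | DimK U X = 1} ∧
    (∀ X : Cantor, DimK U X = 1 → ¬ Computable X) ∧
    ¬ PiIn 2 DeltaPred {X : Cantor | DimK U X = 1} := by
  have hdense : Dense {X : Cantor | DimK U X = 1} :=
    dense_iff_forall_exists_pref_eq.2 fun σ =>
      (hU.exists_pref_eq_DimK_eq_one σ).imp fun _ hX => ⟨hX.2, hX.1⟩
  have hnot_computable : ∀ X : Cantor, DimK U X = 1 → ¬ Computable X := fun X hX hXc => by
    simpa [hX] using hU.DimK_eq_zero_of_computable hXc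
  refine ⟨hdense, hnot_computable, fun hPi => ?_⟩
  obtain ⟨X, hX, hXc⟩ := hPi.exists_computable_mem_of_dense hdense
  exact hnot_computable X hX hXc
end
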